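/- Let d0 > 0 and β > 0, let N ≥ 3, let x_1, …, x_N ∈ ℝ² be sensor positions such that at least three of them are non-collinear, let W ⊂ ℝ² be a nonempty compact set, and let s ∈ ℝ² with s ∉ W. Then there exists L > 0 such that for every y ∈ W, Σ_{i=1}^{N} ( ln( (d0 + ‖y − x_i‖^β) / (d0 + ‖s − x_i‖^β) ) )² ≥ L. -/

import Mathlib

/-!
If every sensor were equidistant from `y` and `s ≠ y`, all sensors would lie on the
perpendicular bisector of `y` and `s`, a line in the plane, contradicting non-collinearity.
Since `t ↦ log (d0 + t ^ β)` is injective on `[0, ∞)`, some summand is therefore nonzero, so the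
continuous sum of squares is positive on `W`, and compactness of `W` bounds it away from zero.
-/

open Real EuclideanGeometry AffineSubspace Module

section

variable {V P : Type*} [NormedAddCommGroup V] [InnerProductSpace ℝ V] [MetricSpace P]
  [NormedAddTorsor V P] [Fact (finrank ℝ V = 2)]

theorem collinear_perpBisector {p q : P} (hpq : p ≠ q) :
    Collinear ℝ (perpBisector p q : Set P) := by
  have : FiniteDimensional ℝ V := .of_fact_finrank_eq_two
  rw [collinear_iff_finrank_le_one, ← direction_eq_vectorSpan, direction_perpBisector,
    Submodule.finrank_orthogonal_span_singleton (n := 1) (vsub_ne_zero.2 hpq.symm)]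

theorem exists_dist_ne_of_not_collinear {s : Set P} (hs : ¬Collinear ℝ s) {p q : P}
    (hpq : p ≠ q) : ∃ z ∈ s, dist p z ≠ dist q z := by
  by_contra! h
  exact hs <| (collinear_perpBisector hpq).subset fun z hz =>
    mem_perpBisector_iff_dist_eq'.2 (h z hz)

end

theorem Real.log_div_add_rpow_ne_zero {d β a b : ℝ} (hd : 0 < d) (hβ : 0 < β) (ha : 0 ≤ a)
    (hb : 0 ≤ b) (hab : a ≠ b) : log ((d + a ^ β) / (d + b ^ β)) ≠ 0 := by
  have hda : 0 < d + a ^ β := by positivity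
  have hdb : 0 < d + b ^ β := by positivity
  rw [log_div hda.ne' hdb.ne', sub_ne_zero]
  intro h
  exact hab <| (rpow_left_inj ha hb hβ.ne').1 <| add_left_cancel <| log_injOn_pos hda hdb h

theorem exists_positive_lower_bound_general
    (d0 β : ℝ) (hd0 : 0 < d0) (hβ : 0 < β)
    (N : ℕ)
    (x : Fin N → EuclideanSpace ℝ (Fin 2))
    (hnc : ∃ i j k : Fin N,
      ¬ Collinear ℝ ({x i, x j, x k} : Set (EuclideanSpace ℝ (Fin 2))))
    (W : Set (EuclideanSpace ℝ (Fin 2))) (hWc : IsCompact W)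
    (s : EuclideanSpace ℝ (Fin 2)) (hs : s ∉ W) :
    ∃ L > 0, ∀ y ∈ W,
      L ≤ ∑ i, (Real.log ((d0 + ‖y - x i‖ ^ β) / (d0 + ‖s - x i‖ ^ β))) ^ 2 := by
  have : Fact (finrank ℝ (EuclideanSpace ℝ (Fin 2)) = 2) := ⟨finrank_euclideanSpace_fin⟩
  obtain ⟨i, j, k, hijk⟩ := hnc
  have hcont : Continuous fun y : EuclideanSpace ℝ (Fin 2) =>
      ∑ m, (log ((d0 + ‖y - x m‖ ^ β) / (d0 + ‖s - x m‖ ^ β))) ^ 2 := by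
    fun_prop (disch := first | exact hβ.le | intro; positivity)
  refine hWc.exists_forall_le' hcont.continuousOn fun y hy => ?_
  obtain ⟨z, hz, hne⟩ := exists_dist_ne_of_not_collinear hijk (ne_of_mem_of_not_mem hy hs)
  obtain ⟨m, rfl⟩ : ∃ m, x m = z := by rcases hz with rfl | rfl | rfl <;> exact ⟨_, rfl⟩
  rw [dist_eq_norm, dist_eq_norm] at hne
  refine Finset.sum_pos' (fun _ _ => sq_nonneg _) ⟨m, Finset.mem_univ m, ?_⟩
  exact sq_pos_of_ne_zero <|
    log_div_add_rpow_ne_zero hd0 hβ (norm_nonneg _) (norm_nonneg _) hne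

/-- Existence of a strictly positive lower bound on the summed squared log-power
mismatch over a compact region not containing the source, given at least three
non-collinear sensors. -/
theorem exists_positive_lower_bound
    (d0 β : ℝ) (hd0 : 0 < d0) (hβ : 0 < β)
    (N : ℕ) (hN : 3 ≤ N)
    (x : Fin N → EuclideanSpace ℝ (Fin 2))
    (hnc : ∃ i j k : Fin N,
      ¬ Collinear ℝ ({x i, x j, x k} : Set (EuclideanSpace ℝ (Fin 2))))
    (W : Set (EuclideanSpace ℝ (Fin 2))) (hWne : W.Nonempty) (hWc : IsCompact W)
    (s : EuclideanSpace ℝ (Fin 2)) (hs : s ∉ W) :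
    ∃ L > 0, ∀ y ∈ W,
      L ≤ ∑ i, (Real.log ((d0 + ‖y - x i‖ ^ β) / (d0 + ‖s - x i‖ ^ β))) ^ 2 :=
  exists_positive_lower_bound_general d0 β hd0 hβ N x hnc W hWc s hs
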